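/- arXiv:2310.02871 — 9 statements merged into one kernel-verified Lean document; each statement's English description precedes it below -/
import Mathlib

section
/- If m is odd, the group presented by generators b₁, b₂ and the single relation Br^m(b₁,b₂) (i.e., the alternating product b₁b₂b₁⋯ of length m equals b₂b₁b₂⋯ of length m) is isomorphic to the group presented by generators u, v with the single relation u² = vᵐ, via u = b₁b₂b₁⋯b₁ (length m, starting and ending with b₁) and v = b₁b₂. -/
/-!
Write `m = 2k + 1`. Since `a (ba)^k = (ab)^k a`, the braid relation `(ab)^k a = (ba)^k b` gives
`u² = (ab)^k a · (ba)^k b = (ab)^{2k+1} = v^m` for `u = (ab)^k a`, `v = ab`. Conversely, if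
`u² = v^{2k+1}`, then `a = v^{-k} u` and `b = u^{-1} v^{k+1}` satisfy `ab = v`, and both
alternating words of length `2k + 1` in them equal `u`. The two substitutions are mutually inverse.
-/

open FreeGroup

/-- The braid relator `Br^m(b₁,b₂)`: the alternating word of length `m` in `b₁,b₂`
times the inverse of the alternating word of length `m` in `b₂,b₁`. -/
def braidRelator (m : ℕ) : FreeGroup (Fin 2) :=
  ((of 0 * of 1) ^ (m / 2) * (of 0) ^ (m % 2)) *
    ((of 1 * of 0) ^ (m / 2) * (of 1) ^ (m % 2))⁻¹

/-- The relator `u² v^{-m}` for the presentation `⟨u,v | u² = vᵐ⟩`. -/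
def torusRelator (m : ℕ) : FreeGroup (Fin 2) :=
  (of 0) ^ 2 * ((of 1) ^ m)⁻¹

section GroupIdentities

variable {G : Type*} [Group G]

theorem sq_eq_pow_of_braid {a b : G} {k : ℕ} (h : (a * b) ^ k * a = (b * a) ^ k * b) :
    ((a * b) ^ k * a) ^ 2 = (a * b) ^ (2 * k + 1) := by
  have hsemiconj : a * (b * a) ^ k = (a * b) ^ k * a :=
    SemiconjBy.pow_right (by simp only [SemiconjBy, mul_assoc]) k
  calc ((a * b) ^ k * a) ^ 2 = (a * b) ^ k * a * ((b * a) ^ k * b) := by rw [sq, ← h]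
    _ = (a * b) ^ k * (a * (b * a) ^ k) * b := by group
    _ = (a * b) ^ k * (a * b) ^ k * (a * b) := by rw [hsemiconj]; group
    _ = (a * b) ^ (2 * k + 1) := by rw [pow_succ, two_mul, pow_add]

theorem inv_pow_mul_mul_inv_mul_pow_succ (u v : G) (k : ℕ) :
    (v ^ k)⁻¹ * u * (u⁻¹ * v ^ (k + 1)) = v := by
  group

theorem braid_of_sq_eq_pow {u v : G} {k : ℕ} (h : u ^ 2 = v ^ (2 * k + 1)) :
    ((v ^ k)⁻¹ * u * (u⁻¹ * v ^ (k + 1))) ^ k * ((v ^ k)⁻¹ * u) =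
      (u⁻¹ * v ^ (k + 1) * ((v ^ k)⁻¹ * u)) ^ k * (u⁻¹ * v ^ (k + 1)) := by
  have hconj : u⁻¹ * v ^ (k + 1) * ((v ^ k)⁻¹ * u) = u⁻¹ * v * u⁻¹⁻¹ := by group
  calc ((v ^ k)⁻¹ * u * (u⁻¹ * v ^ (k + 1))) ^ k * ((v ^ k)⁻¹ * u)
      = u := by rw [inv_pow_mul_mul_inv_mul_pow_succ]; group
    _ = u⁻¹ * v ^ (2 * k + 1) := by rw [← h]; group
    _ = (u⁻¹ * v ^ (k + 1) * ((v ^ k)⁻¹ * u)) ^ k * (u⁻¹ * v ^ (k + 1)) := by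
        rw [hconj, conj_pow, show 2 * k + 1 = k + (k + 1) by ring, pow_add]; group

end GroupIdentities

theorem lift_braidRelator_eq_one_iff {G : Type*} [Group G] (k : ℕ) (f : Fin 2 → G) :
    FreeGroup.lift f (braidRelator (2 * k + 1)) = 1 ↔
      (f 0 * f 1) ^ k * f 0 = (f 1 * f 0) ^ k * f 1 := by
  have hdiv : (2 * k + 1) / 2 = k := by omega
  have hmod : (2 * k + 1) % 2 = 1 := by omega
  simp only [braidRelator, hdiv, hmod, _root_.map_mul, _root_.map_inv, _root_.map_pow, pow_one,
    lift_apply_of, mul_inv_eq_one]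

theorem lift_torusRelator_eq_one_iff {G : Type*} [Group G] (m : ℕ) (f : Fin 2 → G) :
    FreeGroup.lift f (torusRelator m) = 1 ↔ f 0 ^ 2 = f 1 ^ m := by
  simp only [torusRelator, _root_.map_mul, _root_.map_inv, _root_.map_pow, lift_apply_of,
    mul_inv_eq_one]

theorem PresentedGroup.lift_of_eq_one {α : Type*} {rels : Set (FreeGroup α)} {r : FreeGroup α}
    (hr : r ∈ rels) : FreeGroup.lift (PresentedGroup.of (rels := rels)) r = 1 := by
  rw [show FreeGroup.lift PresentedGroup.of = PresentedGroup.mk rels from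
    FreeGroup.ext_hom _ _ fun _ ↦ lift_apply_of]
  exact PresentedGroup.one_of_mem hr

abbrev DihedralArtinGroup (m : ℕ) : Type :=
  PresentedGroup ({braidRelator m} : Set (FreeGroup (Fin 2)))

abbrev TorusKnotGroup (m : ℕ) : Type :=
  PresentedGroup ({torusRelator m} : Set (FreeGroup (Fin 2)))

open PresentedGroup (toGroup)

theorem DihedralArtinGroup.braid_odd (k : ℕ) :
    ((.of 0 * .of 1) ^ k * .of 0 : DihedralArtinGroup (2 * k + 1)) = (.of 1 * .of 0) ^ k * .of 1 :=
  (lift_braidRelator_eq_one_iff k _).1 (PresentedGroup.lift_of_eq_one (Set.mem_singleton _))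

theorem TorusKnotGroup.sq_eq_pow (m : ℕ) : (.of 0 : TorusKnotGroup m) ^ 2 = .of 1 ^ m :=
  (lift_torusRelator_eq_one_iff _ _).1 (PresentedGroup.lift_of_eq_one (Set.mem_singleton _))

def torusToArtin (k : ℕ) : TorusKnotGroup (2 * k + 1) →* DihedralArtinGroup (2 * k + 1) :=
  toGroup (f := ![(.of 0 * .of 1) ^ k * .of 0, .of 0 * .of 1]) <| by
    rintro _ rfl
    exact (lift_torusRelator_eq_one_iff _ _).2 (sq_eq_pow_of_braid (DihedralArtinGroup.braid_odd k))

def artinToTorus (k : ℕ) : DihedralArtinGroup (2 * k + 1) →* TorusKnotGroup (2 * k + 1) :=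
  toGroup (f := ![(.of 1 ^ k)⁻¹ * .of 0, (.of 0)⁻¹ * .of 1 ^ (k + 1)]) <| by
    rintro _ rfl
    exact (lift_braidRelator_eq_one_iff _ _).2 (braid_of_sq_eq_pow (TorusKnotGroup.sq_eq_pow _))

section Generators

variable (k : ℕ)

@[simp] theorem torusToArtin_of_zero : torusToArtin k (.of 0) = (.of 0 * .of 1) ^ k * .of 0 :=
  toGroup.of _

@[simp] theorem torusToArtin_of_one : torusToArtin k (.of 1) = .of 0 * .of 1 :=
  toGroup.of _

@[simp] theorem artinToTorus_of_zero : artinToTorus k (.of 0) = (.of 1 ^ k)⁻¹ * .of 0 :=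
  toGroup.of _

@[simp] theorem artinToTorus_of_one : artinToTorus k (.of 1) = (.of 0)⁻¹ * .of 1 ^ (k + 1) :=
  toGroup.of _

end Generators

theorem artinToTorus_comp_torusToArtin (k : ℕ) :
    (artinToTorus k).comp (torusToArtin k) = MonoidHom.id _ := by
  have hv : artinToTorus k (.of 0 * .of 1) = .of 1 := by
    rw [_root_.map_mul, artinToTorus_of_zero, artinToTorus_of_one,
      inv_pow_mul_mul_inv_mul_pow_succ]
  refine PresentedGroup.ext <| Fin.forall_fin_two.2 ⟨?_, ?_⟩
  · simp only [MonoidHom.comp_apply, torusToArtin_of_zero, _root_.map_mul, _root_.map_pow, hv,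
      artinToTorus_of_zero, MonoidHom.id_apply]
    group
  · simp only [MonoidHom.comp_apply, torusToArtin_of_one, hv, MonoidHom.id_apply]

theorem torusToArtin_comp_artinToTorus (k : ℕ) :
    (torusToArtin k).comp (artinToTorus k) = MonoidHom.id _ := by
  refine PresentedGroup.ext <| Fin.forall_fin_two.2 ⟨?_, ?_⟩ <;>
  · simp only [MonoidHom.comp_apply, artinToTorus_of_zero, artinToTorus_of_one, _root_.map_mul,
      _root_.map_inv, _root_.map_pow, torusToArtin_of_zero, torusToArtin_of_one, MonoidHom.id_apply]
    group

def torusArtinEquiv (k : ℕ) : TorusKnotGroup (2 * k + 1) ≃* DihedralArtinGroup (2 * k + 1) :=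
  (torusToArtin k).toMulEquiv (artinToTorus k) (artinToTorus_comp_torusToArtin k)
    (torusToArtin_comp_artinToTorus k)

theorem dihedral_artin_iso_torus_odd_general (m : ℕ) (hm : Odd m) :
    ∃ e : PresentedGroup ({torusRelator m} : Set (FreeGroup (Fin 2))) ≃*
        PresentedGroup ({braidRelator m} : Set (FreeGroup (Fin 2))),
      e (PresentedGroup.of 0) =
        (PresentedGroup.of 0 * PresentedGroup.of 1) ^ ((m - 1) / 2) * PresentedGroup.of 0 ∧
      e (PresentedGroup.of 1) = PresentedGroup.of 0 * PresentedGroup.of 1 := by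
  obtain ⟨k, rfl⟩ := hm
  have hk : (2 * k + 1 - 1) / 2 = k := by omega
  refine ⟨torusArtinEquiv k, ?_, torusToArtin_of_one k⟩
  rw [hk]
  exact torusToArtin_of_zero k

theorem dihedral_artin_iso_torus_odd (m : ℕ) (hm : Odd m) (h3 : 3 ≤ m) :
    ∃ e : PresentedGroup ({torusRelator m} : Set (FreeGroup (Fin 2))) ≃*
        PresentedGroup ({braidRelator m} : Set (FreeGroup (Fin 2))),
      e (PresentedGroup.of 0) =
        (PresentedGroup.of 0 * PresentedGroup.of 1) ^ ((m - 1) / 2) * PresentedGroup.of 0 ∧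
      e (PresentedGroup.of 1) = PresentedGroup.of 0 * PresentedGroup.of 1 :=
  dihedral_artin_iso_torus_odd_general m hm
end

section
/- If m is even, the group presented by generators b₁, b₂ with the single relation Br^m(b₁,b₂) is isomorphic to the group presented by generators σ, τ with the single relation (στ)^{m/2} = (τσ)^{m/2}, via σ = b₁b₂b₁ and τ = b₁⁻¹. -/
open FreeGroup

/-- The relator `(στ)^{m/2} ((τσ)^{m/2})⁻¹` for `⟨σ,τ | (στ)^{m/2} = (τσ)^{m/2}⟩`. -/
def sigmaTauRelator (m : ℕ) : FreeGroup (Fin 2) :=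
  (of 0 * of 1) ^ (m / 2) * ((of 1 * of 0) ^ (m / 2))⁻¹

/-!
Under the substitution `σ = b₁b₂b₁`, `τ = b₁⁻¹` one has `στ = b₁b₂` and `τσ = b₂b₁`, so the
substitution, which is an automorphism of the free group with inverse `b₁ = τ⁻¹`, `b₂ = τστ`,
carries the relator `(στ)^{m/2}((τσ)^{m/2})⁻¹` to `(b₁b₂)^{m/2}((b₂b₁)^{m/2})⁻¹`. For even `m`
the latter is exactly the braid relator, and an automorphism of the free group matching the
relators induces an isomorphism of the presented groups.
-/

namespace PresentedGroup

variable {α β : Type*} {s : Set (FreeGroup α)} {t : Set (FreeGroup β)}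

def congr (e : FreeGroup α ≃* FreeGroup β) (h : e '' s = t) :
    PresentedGroup s ≃* PresentedGroup t :=
  QuotientGroup.congr _ _ e <| h ▸ Subgroup.map_normalClosure s e.toMonoidHom e.surjective

theorem congr_apply_of (e : FreeGroup α ≃* FreeGroup β) (h : e '' s = t) (x : α) :
    congr e h (of x) = mk t (e (FreeGroup.of x)) :=
  rfl

end PresentedGroup

def sigmaTauToBraid : FreeGroup (Fin 2) ≃* FreeGroup (Fin 2) :=
  MonoidHom.toMulEquiv (FreeGroup.lift ![of 0 * of 1 * of 0, (of 0)⁻¹])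
    (FreeGroup.lift ![(of 1)⁻¹, of 1 * of 0 * of 1])
    (by ext i; fin_cases i <;> simp [mul_assoc])
    (by ext i; fin_cases i <;> simp [mul_assoc])

theorem sigmaTauToBraid_of_zero : sigmaTauToBraid (of 0) = of 0 * of 1 * of 0 := by
  simp [sigmaTauToBraid]

theorem sigmaTauToBraid_of_one : sigmaTauToBraid (of 1) = (of 0)⁻¹ := by
  simp [sigmaTauToBraid]

theorem sigmaTauToBraid_sigmaTauRelator (m : ℕ) :
    sigmaTauToBraid (sigmaTauRelator m) = sigmaTauRelator m := by
  have hστ : sigmaTauToBraid (of 0 * of 1) = of 0 * of 1 := by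
    rw [_root_.map_mul, sigmaTauToBraid_of_zero, sigmaTauToBraid_of_one]; group
  have hτσ : sigmaTauToBraid (of 1 * of 0) = of 1 * of 0 := by
    rw [_root_.map_mul, sigmaTauToBraid_of_zero, sigmaTauToBraid_of_one]; group
  simp only [sigmaTauRelator, _root_.map_mul, _root_.map_inv, map_pow, hστ, hτσ]

theorem braidRelator_eq_sigmaTauRelator {m : ℕ} (hm : Even m) :
    braidRelator m = sigmaTauRelator m := by
  simp [braidRelator, sigmaTauRelator, Nat.even_iff.mp hm]

theorem dihedral_artin_iso_even_general (m : ℕ) (hm : Even m) :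
    ∃ e : PresentedGroup ({sigmaTauRelator m} : Set (FreeGroup (Fin 2))) ≃*
        PresentedGroup ({braidRelator m} : Set (FreeGroup (Fin 2))),
      e (PresentedGroup.of 0) =
        PresentedGroup.of 0 * PresentedGroup.of 1 * PresentedGroup.of 0 ∧
      e (PresentedGroup.of 1) = (PresentedGroup.of 0 : PresentedGroup _)⁻¹ := by
  have hrel : sigmaTauToBraid '' {sigmaTauRelator m} = {braidRelator m} := by
    rw [Set.image_singleton, sigmaTauToBraid_sigmaTauRelator, braidRelator_eq_sigmaTauRelator hm]
  refine ⟨PresentedGroup.congr sigmaTauToBraid hrel, ?_, ?_⟩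
  · rw [PresentedGroup.congr_apply_of, sigmaTauToBraid_of_zero]
    rfl
  · rw [PresentedGroup.congr_apply_of, sigmaTauToBraid_of_one]
    rfl

theorem dihedral_artin_iso_even (m : ℕ) (hm : Even m) (h2 : 2 ≤ m) :
    ∃ e : PresentedGroup ({sigmaTauRelator m} : Set (FreeGroup (Fin 2))) ≃*
        PresentedGroup ({braidRelator m} : Set (FreeGroup (Fin 2))),
      e (PresentedGroup.of 0) =
        PresentedGroup.of 0 * PresentedGroup.of 1 * PresentedGroup.of 0 ∧
      e (PresentedGroup.of 1) = (PresentedGroup.of 0 : PresentedGroup _)⁻¹ :=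
  dihedral_artin_iso_even_general m hm
end

section
/- Let G be a group generated by two elements x and y satisfying x² = yᵐ for an integer m ≥ 2, and set t₁ = xy and t₂ = yx. Then t₁ and t₂ satisfy the braid relation Br^m(t₁,t₂), i.e., the alternating product t₁t₂t₁⋯ of length m equals t₂t₁t₂⋯ of length m. -/
/-!
Conjugation by `x` swaps `x * y` and `y * x` (the latter because `x ^ 2 = y ^ m` commutes with `y`),
so it carries the alternating product of `y * x` and `x * y` of length `m` to the one of
`x * y` and `y * x`. Since `(y * x) * (x * y) = y ^ (m + 2)`, the former alternating product
collapses to `x ^ (m + 2)`, which commutes with `x`; hence the two alternating products agree.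
-/

/-- `a * b * a * ⋯` with `n` factors. -/
def alternatingProd {G : Type*} [Monoid G] (a b : G) (n : ℕ) : G :=
  (a * b) ^ (n / 2) * a ^ (n % 2)

section Monoid

variable {G : Type*} [Monoid G]

theorem SemiconjBy.alternatingProd {g a b : G} (hab : SemiconjBy g a b) (hba : SemiconjBy g b a)
    (n : ℕ) : SemiconjBy g (alternatingProd a b n) (alternatingProd b a n) :=
  ((hab.mul_right hba).pow_right _).mul_right (hab.pow_right _)

theorem alternatingProd_eq_pow_of_sq_eq_pow {x y : G} {m : ℕ} (hxy : x ^ 2 = y ^ m) :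
    alternatingProd (y * x) (x * y) m = x ^ (m + 2) := by
  have hprod : y * x * (x * y) = y ^ (m + 2) := by
    rw [mul_assoc, ← mul_assoc x, ← sq, hxy, ← pow_succ, ← pow_succ']
  have hexp : (m + 2) * (m / 2) + m % 2 = m * (m / 2 + 1) := by
    nlinarith [Nat.div_add_mod m 2]
  have hcollapse : y ^ ((m + 2) * (m / 2) + m % 2) = x ^ (2 * (m / 2) + 2) := by
    rw [hexp, pow_mul, ← hxy, ← pow_mul, mul_add_one]
  unfold alternatingProd
  rw [hprod, ← pow_mul]
  rcases Nat.mod_two_eq_zero_or_one m with hr | hr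
  · rw [hr, add_zero] at hcollapse
    rw [hr, pow_zero, mul_one, hcollapse]
    congr 1
    omega
  · rw [hr] at hcollapse
    rw [hr, pow_one, ← mul_assoc, ← pow_succ, hcollapse, ← pow_succ]
    congr 1
    omega

end Monoid

theorem braid_relation_of_polygon_general {G : Type*} [Group G] (x y : G) (m : ℕ)
    (hxy : x ^ 2 = y ^ m) :
    (x * y * (y * x)) ^ (m / 2) * (x * y) ^ (m % 2) =
      (y * x * (x * y)) ^ (m / 2) * (y * x) ^ (m % 2) := by
  show alternatingProd (x * y) (y * x) m = alternatingProd (y * x) (x * y) m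
  have hswap : SemiconjBy x (x * y) (y * x) := by
    have hcomm : Commute (x ^ 2) y := hxy ▸ Commute.pow_left rfl m
    rw [SemiconjBy, ← mul_assoc, ← sq, hcomm.eq, sq, mul_assoc]
  have hswap' : SemiconjBy x (y * x) (x * y) := (mul_assoc x y x).symm
  have hcomm : Commute x (alternatingProd (y * x) (x * y) m) := by
    rw [alternatingProd_eq_pow_of_sq_eq_pow hxy]
    exact Commute.self_pow x _
  exact mul_left_cancel ((hswap.alternatingProd hswap' m).trans hcomm.symm)

theorem braid_relation_of_polygon {G : Type*} [Group G] (x y : G) (m : ℕ)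
    (hgen : Subgroup.closure ({x, y} : Set G) = ⊤) (hm : 2 ≤ m)
    (hxy : x ^ 2 = y ^ m) :
    (x * y * (y * x)) ^ (m / 2) * (x * y) ^ (m % 2) =
      (y * x * (x * y)) ^ (m / 2) * (y * x) ^ (m % 2) :=
  braid_relation_of_polygon_general x y m hxy
end

section
/- Let G be a group generated by x and y with x² = yᵐ, m = 2l even, and t₁ = xy, t₂ = yx. Then the alternating product t₁t₂t₁⋯ of length m equals y^{m(l+1)}, and so does the alternating product t₂t₁t₂⋯ of length m. -/
/-!
Both words of length `m` are `l`-th powers of `x y² x` and `y x² y` respectively. The second is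
`y^(m+2)` directly. For the first, `x² = y^m` commutes with both `x` and `y`, so writing
`x y² x = (x y² x⁻¹) x²` and raising to the `l`-th power gives `x y^m x⁻¹ x^(2l) = x^(2(l+1))`.
-/

theorem mul_mul_self_pow_of_commute_sq {G : Type*} [Group G] {x a : G}
    (hc : Commute (x ^ 2) a) (n : ℕ) :
    (x * a * x) ^ n = x * a ^ n * x⁻¹ * x ^ (2 * n) := by
  have hconj : Commute (x * a * x⁻¹) (x ^ 2) :=
    ((Commute.self_pow x 2).mul_left hc.symm).mul_left (Commute.self_pow x 2).inv_left
  have hsplit : x * a * x = x * a * x⁻¹ * x ^ 2 := by group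
  rw [hsplit, hconj.mul_pow, conj_pow, pow_mul]

theorem alternating_word_even_case_general {G : Type*} [Group G] (x y : G) (l m : ℕ)
    (hm : m = 2 * l)
    (hxy : x ^ 2 = y ^ m) :
    (x * y * (y * x)) ^ l = y ^ (m * (l + 1)) ∧
      (y * x * (x * y)) ^ l = y ^ (m * (l + 1)) := by
  subst hm
  constructor
  · have hc : Commute (x ^ 2) (y ^ 2) := hxy ▸ Commute.pow_pow_self y _ 2
    calc (x * y * (y * x)) ^ l = (x * y ^ 2 * x) ^ l := by simp only [sq, mul_assoc]
      _ = x * x ^ 2 * x⁻¹ * x ^ (2 * l) := by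
        rw [mul_mul_self_pow_of_commute_sq hc, ← pow_mul, hxy]
      _ = (x ^ 2) ^ (l + 1) := by group
      _ = y ^ (2 * l * (l + 1)) := by rw [hxy, ← pow_mul]
  · have hword : y * x * (x * y) = y ^ (2 * l + 2) := by
      rw [pow_succ, pow_succ', ← hxy, sq]; group
    rw [hword, ← pow_mul]
    congr 1
    ring

theorem alternating_word_even_case {G : Type*} [Group G] (x y : G) (l m : ℕ)
    (hl : 1 ≤ l) (hm : m = 2 * l)
    (hgen : Subgroup.closure ({x, y} : Set G) = ⊤)
    (hxy : x ^ 2 = y ^ m) :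
    (x * y * (y * x)) ^ l = y ^ (m * (l + 1)) ∧
      (y * x * (x * y)) ^ l = y ^ (m * (l + 1)) :=
  alternating_word_even_case_general x y l m hm hxy
end

section
/- In any group, given elements b₁, b₂, b₃ satisfying the braid relation Br(b₂,b₃) (b₂b₃b₂ = b₃b₂b₃), the commutation relation Co(b₁, b₃^{b₂}) (i.e., b₁ commutes with b₂⁻¹b₃b₂) holds if and only if Co(b₂, b₁^{b₃}) holds (i.e., b₂ commutes with b₃⁻¹b₁b₃). -/
/-! The braid relation rewrites `b₃ ^ b₂` as `b₂ ^ b₃⁻¹`, and conjugating by `b₃` turns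
`Co(b₁, b₂ ^ b₃⁻¹)` into `Co(b₁ ^ b₃, b₂)`. -/

section

variable {G : Type*} [Group G]

theorem inv_mul_mul_eq_mul_mul_inv_of_braid {a b : G} (h : a * b * a = b * a * b) :
    a⁻¹ * b * a = b * a * b⁻¹ := by
  rw [eq_mul_inv_iff_mul_eq, mul_assoc, mul_assoc, inv_mul_eq_iff_eq_mul, ← mul_assoc,
    ← mul_assoc, h]

theorem commute_mul_mul_inv_iff (a b c : G) :
    Commute a (b * c * b⁻¹) ↔ Commute (b⁻¹ * a * b) c := by
  simpa [mul_assoc] using (Commute.conj_iff (a := a) (b := b * c * b⁻¹) b⁻¹).symm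

end

theorem type_II_relation_equiv {G : Type*} [Group G] (b₁ b₂ b₃ : G)
    (hbr : b₂ * b₃ * b₂ = b₃ * b₂ * b₃) :
    (b₁ * (b₂⁻¹ * b₃ * b₂) = (b₂⁻¹ * b₃ * b₂) * b₁) ↔
      (b₂ * (b₃⁻¹ * b₁ * b₃) = (b₃⁻¹ * b₁ * b₃) * b₂) := by
  change Commute b₁ (b₂⁻¹ * b₃ * b₂) ↔ Commute b₂ (b₃⁻¹ * b₁ * b₃)
  rw [inv_mul_mul_eq_mul_mul_inv_of_braid hbr, commute_mul_mul_inv_iff, Commute.symm_iff]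
end

section
/- In any group, given elements b₁, b₂, b₃, b₄ satisfying Br(b₁,b₂) (b₁b₂b₁ = b₂b₁b₂) and Br(b₄,b₃) (b₄b₃b₄ = b₃b₄b₃), the relation Co(b₁, b₄^{b₃b₂}) (b₁ commutes with (b₃b₂)⁻¹b₄(b₃b₂)) holds if and only if Co(b₂^{b₁b₄}, b₃) holds (i.e., (b₁b₄)⁻¹b₂(b₁b₄) commutes with b₃). -/
/-!
Conjugated by `b₂`, the first relation says that `b₂ b₁ b₂⁻¹` commutes with `b₄^{b₃}`. The two braid
relations rewrite these as `b₂^{b₁}` and `b₄ b₃ b₄⁻¹`, and conjugating by `b₄` gives the second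
relation.
-/

theorem mul_mul_inv_eq_inv_mul_mul_of_braid {G : Type*} [Group G] {a b : G}
    (h : a * b * a = b * a * b) : b * a * b⁻¹ = a⁻¹ * b * a := by
  rw [mul_inv_eq_iff_eq_mul, mul_assoc, mul_assoc, eq_inv_mul_iff_mul_eq]
  simpa only [mul_assoc] using h

theorem type_III_relation_equiv {G : Type*} [Group G] (b₁ b₂ b₃ b₄ : G)
    (hbr12 : b₁ * b₂ * b₁ = b₂ * b₁ * b₂)
    (hbr43 : b₄ * b₃ * b₄ = b₃ * b₄ * b₃) :
    (b₁ * ((b₃ * b₂)⁻¹ * b₄ * (b₃ * b₂)) = ((b₃ * b₂)⁻¹ * b₄ * (b₃ * b₂)) * b₁) ↔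
      (((b₁ * b₄)⁻¹ * b₂ * (b₁ * b₄)) * b₃ = b₃ * ((b₁ * b₄)⁻¹ * b₂ * (b₁ * b₄))) := by
  change Commute _ _ ↔ Commute _ _
  calc Commute b₁ ((b₃ * b₂)⁻¹ * b₄ * (b₃ * b₂))
      ↔ Commute (b₂ * b₁ * b₂⁻¹) (b₃⁻¹ * b₄ * b₃) := by
        rw [← Commute.conj_iff b₂]; congr! 1; group
    _ ↔ Commute (b₁⁻¹ * b₂ * b₁) (b₄ * b₃ * b₄⁻¹) := by
        rw [mul_mul_inv_eq_inv_mul_mul_of_braid hbr12,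
          mul_mul_inv_eq_inv_mul_mul_of_braid hbr43.symm]
    _ ↔ Commute ((b₁ * b₄)⁻¹ * b₂ * (b₁ * b₄)) b₃ := by
        rw [← Commute.conj_iff b₄⁻¹]; congr! 1 <;> group
end

section
/- In any group, suppose elements b₁, b₂, b₃ satisfy Br⁵(b₂,b₃) and Co(b₁, b₂^{b₃b₂}). Then the braid relation Br(b₁, b₃^{b₂}) (i.e., b₁ and b₂⁻¹b₃b₂ satisfy aba = bab) holds if and only if Br(b₁^{b₃}, b₂) holds. -/
/-!
Conjugation by `g := b₂^{b₃b₂} · b₃` carries the pair `(b₁, b₃^{b₂})` to `(b₁^{b₃}, b₂)`: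
the first factor of `g` commutes with `b₁`, and the five-term braid relation gives
`b₃^{b₂} · g = b₃b₂b₃ = g · b₂`. Since the braid relation is invariant under conjugation,
the two braid relations are equivalent.
-/

def BraidRel {M : Type*} [Mul M] (x y : M) : Prop :=
  x * y * x = y * x * y

theorem braidRel_map_iff {M N F : Type*} [Mul M] [Mul N] [FunLike F M N] [MulHomClass F M N]
    (f : F) (hf : Function.Injective f) {x y : M} :
    BraidRel (f x) (f y) ↔ BraidRel x y := by
  simp only [BraidRel, ← map_mul, hf.eq_iff]

theorem braidRel_conj_iff {G : Type*} [Group G] (g x y : G) :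
    BraidRel (g⁻¹ * x * g) (g⁻¹ * y * g) ↔ BraidRel x y := by
  simpa using braidRel_map_iff (MulAut.conj g⁻¹) (MulEquiv.injective _) (x := x) (y := y)

theorem conj_mul_of_commute {G : Type*} [Group G] {x z : G} (h : Commute z x) (y : G) :
    (z * y)⁻¹ * x * (z * y) = y⁻¹ * x * y := by
  rw [show (z * y)⁻¹ * x * (z * y) = y⁻¹ * (z⁻¹ * x * z) * y by group, h.inv_mul_cancel]

theorem conj_conj_mul_eq_of_braid5 {G : Type*} [Group G] {a b : G}
    (h : a * b * a * b * a = b * a * b * a * b) :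
    ((b * a)⁻¹ * a * (b * a) * b)⁻¹ * (a⁻¹ * b * a) * ((b * a)⁻¹ * a * (b * a) * b) = a := by
  set g := (b * a)⁻¹ * a * (b * a) * b
  have left : a⁻¹ * b * a * g = b * a * b := by simp only [g]; group
  have right : g * a = b * a * b :=
    calc g * a = a⁻¹ * b⁻¹ * (a * b * a * b * a) := by simp only [g]; group
      _ = b * a * b := by rw [h]; group
  rw [mul_assoc, left, ← right, inv_mul_cancel_left]

theorem type_IV_br_relation_equiv {G : Type*} [Group G] (b₁ b₂ b₃ : G)
    (hbr5 : b₂ * b₃ * b₂ * b₃ * b₂ = b₃ * b₂ * b₃ * b₂ * b₃)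
    (hco : b₁ * ((b₃ * b₂)⁻¹ * b₂ * (b₃ * b₂)) = ((b₃ * b₂)⁻¹ * b₂ * (b₃ * b₂)) * b₁) :
    (b₁ * (b₂⁻¹ * b₃ * b₂) * b₁ = (b₂⁻¹ * b₃ * b₂) * b₁ * (b₂⁻¹ * b₃ * b₂)) ↔
      ((b₃⁻¹ * b₁ * b₃) * b₂ * (b₃⁻¹ * b₁ * b₃) = b₂ * (b₃⁻¹ * b₁ * b₃) * b₂) := by
  set g := (b₃ * b₂)⁻¹ * b₂ * (b₃ * b₂) * b₃
  have conj_b₁ : g⁻¹ * b₁ * g = b₃⁻¹ * b₁ * b₃ := conj_mul_of_commute (Commute.symm hco) b₃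
  have conj_b₃ : g⁻¹ * (b₂⁻¹ * b₃ * b₂) * g = b₂ := conj_conj_mul_eq_of_braid5 hbr5
  change BraidRel b₁ (b₂⁻¹ * b₃ * b₂) ↔ BraidRel (b₃⁻¹ * b₁ * b₃) b₂
  rw [← braidRel_conj_iff g, conj_b₁, conj_b₃]
end

section
/- In any group, suppose b₁, …, b_l (l ≥ 3) satisfy the braid relations Br(b_i, b_{i+1}) for consecutive indices (cyclically, indices mod l) and commutation relations Co(b_i, b_j) for non-consecutive indices. Then the relation Co(b₁, b_l^{b_{l-1}⋯b₂}) is equivalent to the relation Co(b₂, b₁^{b_l b_{l-1}⋯b₃}). -/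
/-!
Write `E = b_{l-1} ⋯ b_3`, so that `b_{l-1} ⋯ b_2 = E b_2` and `b_l ⋯ b_3 = b_l E`, and `E` commutes
with `b_1`. Conjugating by `E` reduces the claim to `Co(a, b⁻¹ m b) ↔ Co(b, m⁻¹ a m)` for
`a = b_1`, `b = b_2`, `m = E⁻¹ b_l E`, where `a` braids with both `b` and `m`. A braid relation
`x y x = y x y` reads `x y x⁻¹ = y⁻¹ x y`, so conjugating by `b` and then by `a⁻¹` turns the left
side into `Co(b a b⁻¹, m) = Co(a⁻¹ b a, m)` and then into `Co(b, a m a⁻¹) = Co(b, m⁻¹ a m)`.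
-/

section Braid

variable {G : Type*} [Group G]

theorem mul_mul_inv_eq_of_braid {x y : G} (h : x * y * x = y * x * y) :
    x * y * x⁻¹ = y⁻¹ * x * y :=
  calc x * y * x⁻¹ = y⁻¹ * (y * x * y) * x⁻¹ := by group
    _ = y⁻¹ * (x * y * x) * x⁻¹ := by rw [h]
    _ = y⁻¹ * x * y := by group

theorem commute_inv_mul_mul_iff (g : G) {x y : G} :
    Commute x (g⁻¹ * y * g) ↔ Commute (g * x * g⁻¹) y := by
  rw [← Commute.conj_iff g, show g * (g⁻¹ * y * g) * g⁻¹ = y by group]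

theorem commute_conj_iff_of_braid {a b m : G} (hab : a * b * a = b * a * b)
    (hma : m * a * m = a * m * a) :
    Commute a (b⁻¹ * m * b) ↔ Commute b (m⁻¹ * a * m) :=
  calc Commute a (b⁻¹ * m * b) ↔ Commute (b * a * b⁻¹) m := commute_inv_mul_mul_iff b
    _ ↔ Commute (a⁻¹ * b * a) m := by rw [mul_mul_inv_eq_of_braid hab.symm]
    _ ↔ Commute b (a * m * a⁻¹) := by
      simpa using (commute_inv_mul_mul_iff a⁻¹ (x := b) (y := m)).symm
    _ ↔ Commute b (m⁻¹ * a * m) := by rw [mul_mul_inv_eq_of_braid hma.symm]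

theorem commute_conj_iff_of_braid_of_commute {a b m e : G} (hab : a * b * a = b * a * b)
    (hma : m * a * m = a * m * a) (hae : Commute a e) :
    Commute a ((e * b)⁻¹ * m * (e * b)) ↔ Commute b ((m * e)⁻¹ * a * (m * e)) := by
  have ha : e⁻¹ * a * e = a := by rw [mul_assoc, hae.eq, inv_mul_cancel_left]
  have hma' : (e⁻¹ * m * e) * a * (e⁻¹ * m * e) = a * (e⁻¹ * m * e) * a := by
    rw [← ha]
    calc (e⁻¹ * m * e) * (e⁻¹ * a * e) * (e⁻¹ * m * e) = e⁻¹ * (m * a * m) * e := by group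
      _ = e⁻¹ * (a * m * a) * e := by rw [hma]
      _ = (e⁻¹ * a * e) * (e⁻¹ * m * e) * (e⁻¹ * a * e) := by group
  have hc : (e * b)⁻¹ * m * (e * b) = b⁻¹ * (e⁻¹ * m * e) * b := by group
  have hd : (m * e)⁻¹ * a * (m * e) = (e⁻¹ * m * e)⁻¹ * a * (e⁻¹ * m * e) := by
    conv_rhs => rw [← ha]
    group
  rw [hc, hd]
  exact commute_conj_iff_of_braid hab hma'

end Braid

section DescendingProduct

variable {M : Type*} [Monoid M]

theorem List.prod_map_range_succ_sub (f : ℕ → M) (n : ℕ) :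
    ((List.range (n + 1)).map fun k => f (n + 1 - k)).prod =
      ((List.range n).map fun k => f (n + 1 - k)).prod * f 1 := by
  rw [List.prod_range_succ, Nat.add_sub_cancel_left]

theorem List.prod_map_range_succ_add_two_sub (f : ℕ → M) (n : ℕ) :
    ((List.range (n + 1)).map fun k => f (n + 2 - k)).prod =
      f (n + 2) * ((List.range n).map fun k => f (n + 1 - k)).prod := by
  rw [List.prod_range_succ']
  congr 3 with k
  rw [show n + 2 - k.succ = n + 1 - k by omega]

end DescendingProduct

theorem ZMod.natCast_ne_natCast_of_lt {l m n : ℕ} (hm : m < l) (hn : n < l) (h : m ≠ n) :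
    (m : ZMod l) ≠ n := by
  rwa [Ne, ZMod.natCast_eq_natCast_iff', Nat.mod_eq_of_lt hm, Nat.mod_eq_of_lt hn]

theorem commute_zero_natCast_of_nonadjacent {G : Type*} [Group G] {l n : ℕ} {b : ZMod l → G}
    (hco : ∀ i j : ZMod l, i ≠ j → i + 1 ≠ j → j + 1 ≠ i → b i * b j = b j * b i)
    (h2 : 2 ≤ n) (hn : n + 2 ≤ l) : Commute (b 0) (b n) := by
  refine hco 0 n ?_ ?_ ?_
  · exact_mod_cast ZMod.natCast_ne_natCast_of_lt (m := 0) (by omega) (by omega) (by omega)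
  · rw [zero_add, ← Nat.cast_one]
    exact ZMod.natCast_ne_natCast_of_lt (by omega) (by omega) (by omega)
  · rw [← Nat.cast_add_one, ← Nat.cast_zero]
    exact ZMod.natCast_ne_natCast_of_lt (by omega) (by omega) (by omega)

theorem cycle_potential_relation_rotation {G : Type*} [Group G] (l : ℕ) (hl : 3 ≤ l)
    (b : ZMod l → G)
    (hbr : ∀ i : ZMod l, b i * b (i + 1) * b i = b (i + 1) * b i * b (i + 1))
    (hco : ∀ i j : ZMod l, i ≠ j → i + 1 ≠ j → j + 1 ≠ i → b i * b j = b j * b i) :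
    -- `c = b_{l-1} ⋯ b₂` and `d = b_l b_{l-1} ⋯ b₃` (with `b₁,…,b_l` indexed by `0,…,l-1`)
    (letI c : G := ((List.range (l - 2)).map (fun k => b ((l - 2 - k : ℕ) : ZMod l))).prod
     b 0 * (c⁻¹ * b ((l - 1 : ℕ) : ZMod l) * c) = (c⁻¹ * b ((l - 1 : ℕ) : ZMod l) * c) * b 0) ↔
    (letI d : G := ((List.range (l - 2)).map (fun k => b ((l - 1 - k : ℕ) : ZMod l))).prod
     b 1 * (d⁻¹ * b 0 * d) = (d⁻¹ * b 0 * d) * b 1) := by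
  obtain ⟨n, rfl⟩ : ∃ n, l = n + 3 := ⟨l - 3, by omega⟩
  simp only [show n + 3 - 2 = n + 1 by omega, show n + 3 - 1 = n + 2 by omega]
  set f : ℕ → G := fun k => b k
  rw [List.prod_map_range_succ_sub f, List.prod_map_range_succ_add_two_sub f]
  have hb01 : b 0 * b 1 * b 0 = b 1 * b 0 * b 1 := by simpa using hbr 0
  have hlast : ((n + 2 : ℕ) : ZMod (n + 3)) + 1 = 0 := by
    rw [← Nat.cast_add_one]
    exact ZMod.natCast_self (n + 3)
  have hbl0 : f (n + 2) * b 0 * f (n + 2) = b 0 * f (n + 2) * b 0 := by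
    simpa only [hlast] using hbr (n + 2 : ℕ)
  have hcomm : Commute (b 0) ((List.range n).map fun k => f (n + 1 - k)).prod := by
    refine Commute.list_prod_right _ _ fun x hx => ?_
    obtain ⟨k, hk, rfl⟩ := List.mem_map.mp hx
    exact commute_zero_natCast_of_nonadjacent hco (by simp at hk; omega) (by omega)
  exact commute_conj_iff_of_braid_of_commute hb01 hbl0 hcomm
end

section
/- For odd m ≥ 3, in the free group on a, b, let u = (ab)^{(m-1)/2}a and v = ab. Then the normal closure of the element Br^m(a,b)-relator (aba⋯a)(bab⋯b)⁻¹ (alternating words of length m) equals the normal closure of u²v^{-m}. -/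
open FreeGroup

/-
With `w₁ = (ab)ᵏa` and `w₂ = (ba)ᵏb`, where `m = 2k + 1`, one has `u = w₁` and `w₁w₂ = vᵐ`.
Hence `u²v⁻ᵐ = w₁ (w₁w₂⁻¹) w₁⁻¹` is a conjugate of the braid relator, and conjugate elements
have the same normal closure.
-/

theorem Subgroup.normalClosure_singleton_conj {G : Type*} [Group G] (g x : G) :
    Subgroup.normalClosure {g * x * g⁻¹} = Subgroup.normalClosure {x} := by
  simp only [Subgroup.normalClosure, Group.conjugatesOfSet, Set.mem_singleton_iff,
    Set.iUnion_iUnion_eq_left, (isConj_iff.mpr ⟨g, rfl⟩ : IsConj x (g * x * g⁻¹)).conjugatesOf_eq]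

theorem mul_pow_mul_mul_mul_pow_mul {G : Type*} [Group G] (A B : G) (k : ℕ) :
    ((A * B) ^ k * A) * ((B * A) ^ k * B) = (A * B) ^ (2 * k + 1) := by
  have hsemiconj : SemiconjBy A (B * A) (A * B) := by simp [SemiconjBy, mul_assoc]
  rw [mul_assoc, ← mul_assoc A, hsemiconj.pow_right k, mul_assoc, ← pow_succ,
    ← pow_add, two_mul, add_assoc]

theorem normal_closure_braid_eq_torus_odd_general (m : ℕ) (hm : Odd m) :
    letI a : FreeGroup (Fin 2) := of 0
    letI b : FreeGroup (Fin 2) := of 1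
    letI u : FreeGroup (Fin 2) := (a * b) ^ ((m - 1) / 2) * a
    letI v : FreeGroup (Fin 2) := a * b
    Subgroup.normalClosure
        ({((a * b) ^ ((m - 1) / 2) * a) * (((b * a) ^ ((m - 1) / 2) * b))⁻¹} :
          Set (FreeGroup (Fin 2))) =
      Subgroup.normalClosure ({u ^ 2 * (v ^ m)⁻¹} : Set (FreeGroup (Fin 2))) := by
  obtain ⟨k, rfl⟩ := hm
  have hk : (2 * k + 1 - 1) / 2 = k := by omega
  simp only [hk]
  rw [← mul_pow_mul_mul_mul_pow_mul]
  set w₁ : FreeGroup (Fin 2) := (of 0 * of 1) ^ k * of 0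
  set w₂ : FreeGroup (Fin 2) := (of 1 * of 0) ^ k * of 1
  have hconj : w₁ ^ 2 * (w₁ * w₂)⁻¹ = w₁ * (w₁ * w₂⁻¹) * w₁⁻¹ := by
    simp only [sq, mul_inv_rev, mul_assoc]
  rw [hconj, Subgroup.normalClosure_singleton_conj]

theorem normal_closure_braid_eq_torus_odd (m : ℕ) (hm : Odd m) (h3 : 3 ≤ m) :
    letI a : FreeGroup (Fin 2) := of 0
    letI b : FreeGroup (Fin 2) := of 1
    letI u : FreeGroup (Fin 2) := (a * b) ^ ((m - 1) / 2) * a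
    letI v : FreeGroup (Fin 2) := a * b
    Subgroup.normalClosure
        ({((a * b) ^ ((m - 1) / 2) * a) * (((b * a) ^ ((m - 1) / 2) * b))⁻¹} :
          Set (FreeGroup (Fin 2))) =
      Subgroup.normalClosure ({u ^ 2 * (v ^ m)⁻¹} : Set (FreeGroup (Fin 2))) :=
  normal_closure_braid_eq_torus_odd_general m hm
end
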